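/- Let N ≥ 1, h > 0, and f : ℝ × ℝ → ℝ be differentiable. Define the forward-Euler state map by x₀ = x⁰ and x_{k+1} = x_k + h·f(x_k, u_k) for k = 0,…,N−1, so that x_N is a function of the control vector U = (u₀,…,u_{N−1}). Let E : ℝ → ℝ be differentiable, set λ_{N−1} = E′(x_N), and define backwards λ_{k−1} = λ_k + h·λ_k·∂_x f(x_k, u_k) for k = N−1,…,1. Then for every k with 0 ≤ k ≤ N−1, the partial derivative of the composite function Eᴺ(U) := E(x_N(U)) with respect to u_k equals h·λ_k·∂_u f(x_k, u_k). -/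
import Mathlib


open Finset

/-- Forward-Euler state sequence: `x₀ = x0`, `x_{k+1} = x_k + h f(x_k, u_k)`. -/
noncomputable def stateSeq (f : ℝ → ℝ → ℝ) (h x0 : ℝ) (u : ℕ → ℝ) : ℕ → ℝ
  | 0 => x0
  | k + 1 => stateSeq f h x0 u k + h * f (stateSeq f h x0 u k) (u k)

theorem stmt0 (N : ℕ) (hN : 1 ≤ N) (h : ℝ) (hh : 0 < h)
    (f fx fu : ℝ → ℝ → ℝ)
    (hfx : ∀ x v, HasDerivAt (fun y => f y v) (fx x v) x)
    (hfu : ∀ x v, HasDerivAt (fun w => f x w) (fu x v) v)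
    (E E' : ℝ → ℝ) (hE : ∀ y, HasDerivAt E (E' y) y)
    (x0 : ℝ) (u : ℕ → ℝ) (x : ℕ → ℝ) (hx : x = stateSeq f h x0 u)
    (lam : ℕ → ℝ)
    (hlamN : lam (N - 1) = E' (x N))
    (hlamrec : ∀ k, 1 ≤ k → k ≤ N - 1 →
      lam (k - 1) = lam k + h * lam k * fx (x k) (u k)) :
    ∀ k < N, HasDerivAt
      (fun t => E (stateSeq f h x0 (Function.update u k t) N))
      (h * lam k * fu (x k) (u k)) (u k) := by
  intro k hkN
  -- the state sequence as a function of the k-th control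
  set S : ℝ → ℕ → ℝ := fun t => stateSeq f h x0 (Function.update u k t) with hSdef
  have hSlow : ∀ m, m ≤ k → ∀ t, S t m = x m := by
    intro m hm t
    induction m with
    | zero => simp [hSdef, hx, stateSeq]
    | succ n ih =>
      have h1 : n ≤ k := by omega
      have h2 : n ≠ k := by omega
      simp only [hSdef, stateSeq] at *
      rw [ih h1, Function.update_of_ne h2, hx]
      rfl
  have hSself : ∀ m, S (u k) m = x m := by
    intro m
    simp [hSdef, Function.update_eq_self, hx]
  -- derivative of the state w.r.t. the k-th control
  have key : ∀ m, k + 1 ≤ m → HasDerivAt (fun t => S t m)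
      (h * fu (x k) (u k) * ∏ j ∈ Ico (k + 1) m, (1 + h * fx (x j) (u j))) (u k) := by
    intro m hm
    induction m, hm using Nat.le_induction with
    | base =>
      have hfun : (fun t => S t (k + 1)) = fun t => x k + h * f (x k) t := by
        funext t
        simp only [hSdef, stateSeq]
        rw [show stateSeq f h x0 (Function.update u k t) k = x k from hSlow k le_rfl t,
          Function.update_self]
      rw [hfun]
      simpa using ((hfu (x k) (u k)).const_mul h).const_add (x k)
    | succ m hm ih =>
      have hupd : ∀ t : ℝ, Function.update u k t m = u m := by
        intro t; exact Function.update_of_ne (by omega) _ _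
      have hfun : (fun t => S t (m + 1)) = fun t => S t m + h * f (S t m) (u m) := by
        funext t; simp only [hSdef, stateSeq, hupd]
      rw [hfun]
      have hcomp : HasDerivAt (fun t => f (S t m) (u m))
          (fx (x m) (u m) * (h * fu (x k) (u k) * ∏ j ∈ Ico (k + 1) m, (1 + h * fx (x j) (u j))))
          (u k) := by
        have := (hfx (S (u k) m) (u m)).comp (u k) ih
        rwa [hSself m] at this
      have := ih.add (hcomp.const_mul h)
      have heq : h * fu (x k) (u k) * ∏ j ∈ Ico (k + 1) (m + 1), (1 + h * fx (x j) (u j)) =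
          h * fu (x k) (u k) * (∏ j ∈ Ico (k + 1) m, (1 + h * fx (x j) (u j))) +
          h * (fx (x m) (u m) * (h * fu (x k) (u k) * ∏ j ∈ Ico (k + 1) m, (1 + h * fx (x j) (u j)))) := by
        rw [Finset.prod_Ico_succ_top hm]; ring
      rw [heq]
      exact this
  -- costate in closed form
  have hlamclosed : ∀ j, j ≤ N - 1 →
      lam (N - 1 - j) = E' (x N) * ∏ i ∈ Ico (N - j) N, (1 + h * fx (x i) (u i)) := by
    intro j hj
    induction j with
    | zero => simp [hlamN]
    | succ n ih =>
      have hn : n ≤ N - 1 := by omega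
      have h1 : 1 ≤ N - 1 - n := by omega
      have h2 : N - 1 - n ≤ N - 1 := by omega
      have hrec := hlamrec (N - 1 - n) h1 h2
      have e1 : N - 1 - (n + 1) = N - 1 - n - 1 := by omega
      have e2 : N - (n + 1) = N - 1 - n := by omega
      have e3 : (N - 1 - n) + 1 = N - n := by omega
      rw [e1, hrec, ih hn, e2, Finset.prod_eq_prod_Ico_succ_bot (by omega : N - 1 - n < N), e3]
      ring
  have hlamk : lam k = E' (x N) * ∏ i ∈ Ico (k + 1) N, (1 + h * fx (x i) (u i)) := by
    have := hlamclosed (N - 1 - k) (by omega)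
    have e1 : N - 1 - (N - 1 - k) = k := by omega
    have e2 : N - (N - 1 - k) = k + 1 := by omega
    rwa [e1, e2] at this
  -- compose with E
  have hSN := key N (by omega)
  have hEcomp := (hE (S (u k) N)).comp (u k) hSN
  rw [hSself N] at hEcomp
  have hval : h * lam k * fu (x k) (u k) =
      E' (x N) * (h * fu (x k) (u k) * ∏ j ∈ Ico (k + 1) N, (1 + h * fx (x j) (u j))) := by
    rw [hlamk]; ring
  rw [hval]
  exact hEcomp
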